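/- Let F : ℝ → ℝ, d ∈ ℕ, δ ≥ 0, and keys k_1 < k_2 < ⋯ < k_n. Let 0 = g_0 < g_1 < ⋯ < g_t = n be the greedy boundary sequence, meaning that for each i < t, g_{i+1} is the largest index m with g_i < m ≤ n such that E_d({k_{g_i+1}, …, k_m}) ≤ δ. Then for every δ-feasible segmentation 0 = b_0 < b_1 < ⋯ < b_h = n and every index ℓ ≤ min(t, h), the greedy boundaries dominate: g_ℓ ≥ b_ℓ. In other words, with the same number of intervals the greedy segmentation always covers at least as many keys as any δ-feasible segmentation. -/

import Mathlib

/-!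
Induction on `ℓ`. If `b ℓ ≤ g ℓ < b (ℓ + 1)`, the keys `g ℓ + 1, …, b (ℓ + 1)` form a subset of
the δ-feasible block `b ℓ + 1, …, b (ℓ + 1)`; since the fitting error is monotone under
inclusion, that subset is a δ-feasible extension of the `ℓ`-th greedy block, and maximality of
the greedy step gives `b (ℓ + 1) ≤ g (ℓ + 1)`.
-/

/-- Minimax polynomial fitting error of degree `d` for `F` on the key set `S`:
`E_d(S) = inf over (a_0,…,a_d) ∈ ℝ^{d+1} of sup_{k ∈ S} |F k - Σ_j a_j k^j|`. -/
noncomputable def fitError (F : ℝ → ℝ) (d : ℕ) (S : Set ℝ) : ℝ :=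
  ⨅ a : Fin (d + 1) → ℝ,
    sSup ((fun x => |F x - ∑ j : Fin (d + 1), a j * x ^ (j : ℕ)|) '' S)

lemma fitError_mono (F : ℝ → ℝ) (d : ℕ) {S T : Set ℝ} (hST : S ⊆ T) (hT : T.Finite) :
    fitError F d S ≤ fitError F d T := by
  have sSup_abs_nonneg : ∀ (f : ℝ → ℝ) (U : Set ℝ), 0 ≤ sSup ((fun x => |f x|) '' U) :=
    fun f U => Real.sSup_nonneg (by rintro _ ⟨x, -, rfl⟩; exact abs_nonneg _)
  refine ciInf_mono ⟨0, ?_⟩ fun a => ?_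
  · rintro _ ⟨a, rfl⟩
    exact sSup_abs_nonneg _ _
  · rcases S.eq_empty_or_nonempty with rfl | hS
    · rw [Set.image_empty, Real.sSup_empty]
      exact sSup_abs_nonneg _ _
    · exact csSup_le_csSup (hT.image _).bddAbove (hS.image _) (Set.image_mono hST)

theorem greedy_boundaries_dominate_general (F : ℝ → ℝ) (d : ℕ) (δ : ℝ)
    (n : ℕ) (k : ℕ → ℝ)
    -- greedy boundary sequence 0 = g 0 < g 1 < ⋯ < g t = n
    (t : ℕ) (g : ℕ → ℕ) (hg0 : g 0 = 0)
    (hgreedy : ∀ i < t, g i < g (i + 1) ∧ g (i + 1) ≤ n ∧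
      fitError F d (k '' Set.Icc (g i + 1) (g (i + 1))) ≤ δ ∧
      ∀ m, g i < m → m ≤ n →
        fitError F d (k '' Set.Icc (g i + 1) m) ≤ δ → m ≤ g (i + 1))
    -- arbitrary δ-feasible segmentation 0 = b 0 < b 1 < ⋯ < b h = n
    (h : ℕ) (b : ℕ → ℕ) (hb0 : b 0 = 0)
    (hbn : ∀ i < h, b (i + 1) ≤ n)
    (hbfeas : ∀ i < h, fitError F d (k '' Set.Icc (b i + 1) (b (i + 1))) ≤ δ) :
    ∀ ℓ, ℓ ≤ t → ℓ ≤ h → b ℓ ≤ g ℓ := by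
  intro ℓ
  induction ℓ with
  | zero => intro _ _; rw [hb0, hg0]
  | succ ℓ ih =>
    intro hℓt hℓh
    have hb_le_g : b ℓ ≤ g ℓ := ih (by omega) (by omega)
    obtain ⟨hg_lt, -, -, hg_max⟩ := hgreedy ℓ hℓt
    rcases le_or_gt (b (ℓ + 1)) (g ℓ) with hle | hlt
    · exact hle.trans hg_lt.le
    · have hsub : k '' Set.Icc (g ℓ + 1) (b (ℓ + 1)) ⊆ k '' Set.Icc (b ℓ + 1) (b (ℓ + 1)) :=
        Set.image_mono (Set.Icc_subset_Icc (by omega) le_rfl)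
      refine hg_max _ hlt (hbn ℓ hℓh) ?_
      exact (fitError_mono F d hsub ((Set.finite_Icc _ _).image k)).trans (hbfeas ℓ hℓh)

/-- With the same number of intervals, the greedy boundaries dominate
the boundaries of any δ-feasible segmentation: `g ℓ ≥ b ℓ` for all `ℓ ≤ min t h`. -/
theorem greedy_boundaries_dominate (F : ℝ → ℝ) (d : ℕ) (δ : ℝ) (hδ : 0 ≤ δ)
    (n : ℕ) (k : ℕ → ℝ)
    (hk : ∀ i j, 1 ≤ i → i < j → j ≤ n → k i < k j)
    -- greedy boundary sequence 0 = g 0 < g 1 < ⋯ < g t = n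
    (t : ℕ) (g : ℕ → ℕ) (hg0 : g 0 = 0) (hgt : g t = n)
    (hgreedy : ∀ i < t, g i < g (i + 1) ∧ g (i + 1) ≤ n ∧
      fitError F d (k '' Set.Icc (g i + 1) (g (i + 1))) ≤ δ ∧
      ∀ m, g i < m → m ≤ n →
        fitError F d (k '' Set.Icc (g i + 1) m) ≤ δ → m ≤ g (i + 1))
    -- arbitrary δ-feasible segmentation 0 = b 0 < b 1 < ⋯ < b h = n
    (h : ℕ) (b : ℕ → ℕ) (hb0 : b 0 = 0) (hbh : b h = n)
    (hbmono : ∀ i < h, b i < b (i + 1))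
    (hbn : ∀ i < h, b (i + 1) ≤ n)
    (hbfeas : ∀ i < h, fitError F d (k '' Set.Icc (b i + 1) (b (i + 1))) ≤ δ) :
    ∀ ℓ, ℓ ≤ t → ℓ ≤ h → b ℓ ≤ g ℓ :=
  greedy_boundaries_dominate_general F d δ n k t g hg0 hgreedy h b hb0 hbn hbfeas
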